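/- Let F_n be convex functions on ℝⁿ, uniformly Lipschitz, decreasing pointwise to a convex function F : ℝⁿ → ℝ. Let P be the closure of the range of ∂F. Then F_n* converges to F* locally uniformly on the interior of P. -/

import Mathlib

open scoped RealInnerProductSpace
open Filter

/-!
Monotone convergence for Legendre transforms, upgraded by Dini's theorem. Since `G ≤ F k`, every
`F k*` is finite on the effective domain `D` of `G*`, and `F k* ↑ G*` there: the upper bound is
immediate, and each affine minorant `⟪x, p⟫ - G x` of `G*` is the limit of the corresponding
minorants of `F k*`. All these conjugates are convex, hence continuous on the interior of the
convex set `D`, so Dini's theorem makes the convergence locally uniform on `interior D`. Finally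
the range of `∂G` lies in `D`, and `interior (closure D) = interior D` for convex `D` in finite
dimension.
-/

/-- The convex subgradient. -/
def subgrad {n : ℕ} (u : EuclideanSpace ℝ (Fin n) → ℝ) (x : EuclideanSpace ℝ (Fin n)) :
    Set (EuclideanSpace ℝ (Fin n)) :=
  {y | ∀ z, u x + ⟪y, z - x⟫ ≤ u z}

/-- Real-valued Legendre transform (meaningful where the supremum is finite). -/
noncomputable def legendreR {n : ℕ} (u : EuclideanSpace ℝ (Fin n) → ℝ)
    (p : EuclideanSpace ℝ (Fin n)) : ℝ :=
  sSup (Set.range fun x => (⟪x, p⟫ : ℝ) - u x)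

open Set Topology

theorem Convex.interior_closure_eq_interior {E : Type*} [NormedAddCommGroup E] [NormedSpace ℝ E]
    [FiniteDimensional ℝ E] {s : Set E} (hs : Convex ℝ s) :
    interior (closure s) = interior s := by
  rcases (interior s).eq_empty_or_nonempty with h | h
  · refine subset_antisymm (fun x hx => ?_) (interior_mono subset_closure)
    have hspan : affineSpan ℝ s = ⊤ := by
      refine top_unique ((isOpen_interior.affineSpan_eq_top ⟨x, hx⟩).symm.le.trans ?_)
      exact affineSpan_le.2 (interior_subset.trans (closure_minimal (subset_affineSpan ℝ s)
        (affineSpan ℝ s).closed_of_finiteDimensional))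
    rw [← hs.interior_nonempty_iff_affineSpan_eq_top, h] at hspan
    exact absurd hspan not_nonempty_empty
  · exact hs.interior_closure_eq_interior_of_nonempty_interior h

section Legendre

variable {n : ℕ} {u v : EuclideanSpace ℝ (Fin n) → ℝ} {p q : EuclideanSpace ℝ (Fin n)}

/-- The effective domain of `u*`, where `legendreR u` is the genuine supremum. -/
def legendreDom (u : EuclideanSpace ℝ (Fin n) → ℝ) : Set (EuclideanSpace ℝ (Fin n)) :=
  {p | BddAbove (range fun x => ⟪x, p⟫ - u x)}

lemma inner_sub_le_legendreR (hp : p ∈ legendreDom u) (x : EuclideanSpace ℝ (Fin n)) :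
    ⟪x, p⟫ - u x ≤ legendreR u p :=
  le_csSup hp ⟨x, rfl⟩

lemma legendreR_le {c : ℝ} (h : ∀ x, ⟪x, p⟫ - u x ≤ c) : legendreR u p ≤ c :=
  csSup_le (range_nonempty _) (forall_mem_range.2 h)

lemma inner_smul_add_smul_sub_le (hp : p ∈ legendreDom u) (hq : q ∈ legendreDom u) {a b : ℝ}
    (ha : 0 ≤ a) (hb : 0 ≤ b) (hab : a + b = 1) (x : EuclideanSpace ℝ (Fin n)) :
    ⟪x, a • p + b • q⟫ - u x ≤ a * legendreR u p + b * legendreR u q := by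
  rw [inner_add_right, real_inner_smul_right, real_inner_smul_right]
  linear_combination mul_le_mul_of_nonneg_left (inner_sub_le_legendreR hp x) ha +
    mul_le_mul_of_nonneg_left (inner_sub_le_legendreR hq x) hb + u x * hab

lemma convex_legendreDom : Convex ℝ (legendreDom u) := fun _ hp _ hq _ _ ha hb hab =>
  ⟨_, forall_mem_range.2 (inner_smul_add_smul_sub_le hp hq ha hb hab)⟩

lemma convexOn_legendreR : ConvexOn ℝ (legendreDom u) (legendreR u) :=
  ⟨convex_legendreDom, fun _ hp _ hq _ _ ha hb hab =>
    legendreR_le (inner_smul_add_smul_sub_le hp hq ha hb hab)⟩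

lemma continuousOn_legendreR : ContinuousOn (legendreR u) (interior (legendreDom u)) :=
  convexOn_legendreR.continuousOn_interior

lemma iUnion_subgrad_subset_legendreDom : (⋃ x, subgrad u x) ⊆ legendreDom u := by
  intro p hp
  obtain ⟨x, hx⟩ := mem_iUnion.1 hp
  refine ⟨⟪x, p⟫ - u x, forall_mem_range.2 fun z => ?_⟩
  have hxz := hx z
  rw [inner_sub_right, real_inner_comm z p, real_inner_comm x p] at hxz
  linarith

lemma legendreDom_mono (huv : u ≤ v) : legendreDom u ⊆ legendreDom v := fun _ ⟨M, hM⟩ =>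
  ⟨M, forall_mem_range.2 fun x => (sub_le_sub_left (huv x) _).trans (hM ⟨x, rfl⟩)⟩

lemma legendreR_anti (huv : u ≤ v) (hp : p ∈ legendreDom u) : legendreR v p ≤ legendreR u p :=
  legendreR_le fun x => (sub_le_sub_left (huv x) _).trans (inner_sub_le_legendreR hp x)

lemma tendsto_legendreR {ι : Type*} {l : Filter ι} {F : ι → EuclideanSpace ℝ (Fin n) → ℝ}
    (huF : ∀ i, u ≤ F i) (hlim : ∀ x, Tendsto (F · x) l (𝓝 (u x))) (hp : p ∈ legendreDom u) :
    Tendsto (fun i => legendreR (F i) p) l (𝓝 (legendreR u p)) := by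
  refine tendsto_order.2 ⟨fun a ha => ?_, fun a ha =>
    Eventually.of_forall fun i => (legendreR_anti (huF i) hp).trans_lt ha⟩
  obtain ⟨_, ⟨x, rfl⟩, hax⟩ := exists_lt_of_lt_csSup (range_nonempty _) ha
  filter_upwards [(hlim x).eventually (gt_mem_nhds (show u x < ⟪x, p⟫ - a by linarith))]
    with i hi
  have := inner_sub_le_legendreR (legendreDom_mono (huF i) hp) x
  linarith

lemma tendstoLocallyUniformlyOn_legendreR {ι : Type*} [Preorder ι] [IsDirectedOrder ι]
    {F : ι → EuclideanSpace ℝ (Fin n) → ℝ} (hanti : ∀ x, Antitone (F · x))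
    (hlim : ∀ x, Tendsto (F · x) atTop (𝓝 (u x))) :
    TendstoLocallyUniformlyOn (fun i => legendreR (F i)) (legendreR u) atTop
      (interior (legendreDom u)) := by
  have huF : ∀ i, u ≤ F i := fun i x => (hanti x).le_of_tendsto (hlim x) i
  refine Monotone.tendstoLocallyUniformlyOn_of_forall_tendsto
    (fun i => continuousOn_legendreR.mono (interior_mono (legendreDom_mono (huF i))))
    (fun p hp i j hij => ?_) continuousOn_legendreR
    (fun p hp => tendsto_legendreR huF hlim (interior_subset hp))
  exact legendreR_anti (fun x => hanti x hij) (legendreDom_mono (huF j) (interior_subset hp))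

end Legendre

theorem stmt14_general {n : ℕ}
    (F : ℕ → EuclideanSpace ℝ (Fin n) → ℝ) (G : EuclideanSpace ℝ (Fin n) → ℝ)
    (hanti : ∀ x, Antitone fun k => F k x)
    (hlim : ∀ x, Tendsto (fun k => F k x) atTop (nhds (G x))) :
    TendstoLocallyUniformlyOn (fun k => legendreR (F k)) (legendreR G) atTop
      (interior (closure (⋃ x, subgrad G x))) :=
  (tendstoLocallyUniformlyOn_legendreR hanti hlim).mono <|
    (interior_mono (closure_mono iUnion_subgrad_subset_legendreDom)).trans
      convex_legendreDom.interior_closure_eq_interior.subset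

/-- If uniformly Lipschitz convex `F_n` decrease pointwise to convex `F`, then the Legendre
transforms `F_n*` converge to `F*` locally uniformly on the interior of the closure `P` of
the range of `∂F`. -/
theorem stmt14 {n : ℕ} (L : NNReal)
    (F : ℕ → EuclideanSpace ℝ (Fin n) → ℝ) (G : EuclideanSpace ℝ (Fin n) → ℝ)
    (hFconv : ∀ k, ConvexOn ℝ Set.univ (F k)) (hGconv : ConvexOn ℝ Set.univ G)
    (hlip : ∀ k, LipschitzWith L (F k)) (hGlip : LipschitzWith L G)
    (hanti : ∀ x, Antitone fun k => F k x)
    (hlim : ∀ x, Tendsto (fun k => F k x) atTop (nhds (G x))) :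
    TendstoLocallyUniformlyOn (fun k => legendreR (F k)) (legendreR G) atTop
      (interior (closure (⋃ x, subgrad G x))) :=
  stmt14_general F G hanti hlim
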